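/- arXiv:2511.07435 — 2 statements merged into one kernel-verified Lean document; each statement's English description precedes it below -/
import Mathlib

section
/- For every x ≥ 0, the first central moment satisfies M_n^{(α,β)}[t ↦ (t − x)](x) = (α + 1 + β x)/(n − β). -/
open MeasureTheory Real Filter

/-- The Szász–Mirakyan basis functions `ψ_{n,k}(x) = e^{-nx} (nx)^k / k!`. -/
noncomputable def psi (n k : ℕ) (x : ℝ) : ℝ :=
  Real.exp (-(n * x)) * (n * x) ^ k / (Nat.factorial k)

/-- The Szász–Mirakyan–Laguerre–Durrmeyer operator `M_n^{(α,β)}`. -/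
noncomputable def M (α β : ℝ) (n : ℕ) (f : ℝ → ℝ) (x : ℝ) : ℝ :=
  ∑' k : ℕ, (((n : ℝ) - β) ^ ((k : ℝ) + α + 1) / Real.Gamma ((k : ℝ) + α + 1)) *
    (∫ t in Set.Ioi (0 : ℝ), f t * t ^ ((k : ℝ) + α) * Real.exp (-((n : ℝ) - β) * t)) *
    psi n k x

/-- The `r`-th moment `μ_r^{(α,β)}(x) = M_n^{(α,β)}[t ↦ t^r](x)`. -/
noncomputable def mu (α β : ℝ) (n : ℕ) (r : ℕ) (x : ℝ) : ℝ :=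
  M α β n (fun t => t ^ r) x

/-! With `a = n - β`, the `k`-th Laguerre coefficient of `t ↦ t - x` is a ratio of Gamma
integrals, equal to `(k + α + 1) / a - x` by `Γ(s + 1) = s Γ(s)`. The operator thus reduces to
averaging this affine function of `k` against the Poisson weights `ψ_{n,k}(x)`, which have total
mass `1` and mean `n x`; this gives `(n x + α + 1) / a - x = (α + 1 + β x) / a`. -/

lemma Real.hasSum_pow_div_factorial (y : ℝ) :
    HasSum (fun k : ℕ => y ^ k / k.factorial) (Real.exp y) := by
  rw [Real.exp_eq_exp_ℝ]
  exact NormedSpace.expSeries_div_hasSum_exp y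

lemma Real.hasSum_mul_pow_div_factorial (y : ℝ) :
    HasSum (fun k : ℕ => k * (y ^ k / k.factorial)) (y * Real.exp y) := by
  have hshift : (fun k : ℕ => ((k + 1 : ℕ) : ℝ) * (y ^ (k + 1) / (k + 1).factorial))
      = fun k : ℕ => y * (y ^ k / k.factorial) := by
    funext k
    rw [Nat.factorial_succ]
    push_cast
    field_simp
    ring
  rw [← hasSum_nat_add_iff' 1, hshift]
  simpa using (Real.hasSum_pow_div_factorial y).mul_left y

lemma hasSum_psi (n : ℕ) (x : ℝ) : HasSum (fun k => psi n k x) 1 := by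
  have h := (Real.hasSum_pow_div_factorial (n * x)).mul_left (Real.exp (-(n * x)))
  rw [← Real.exp_add, neg_add_cancel, Real.exp_zero] at h
  simpa only [psi, mul_div_assoc] using h

lemma hasSum_mul_psi (n : ℕ) (x : ℝ) : HasSum (fun k => k * psi n k x) (n * x) := by
  have h := (Real.hasSum_mul_pow_div_factorial (n * x)).mul_left (Real.exp (-(n * x)))
  rw [mul_left_comm, ← Real.exp_add, neg_add_cancel, Real.exp_zero, mul_one] at h
  simpa only [psi, mul_div_assoc, mul_left_comm] using h

section GammaIntegral

variable {a p : ℝ}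

lemma integral_rpow_mul_exp_neg_mul_Ioi' (ha : 0 < a) (hp : -1 < p) :
    ∫ t in Set.Ioi (0 : ℝ), t ^ p * Real.exp (-a * t) = Real.Gamma (p + 1) / a ^ (p + 1) := by
  simpa [neg_mul, Real.inv_rpow ha.le, div_eq_inv_mul] using
    Real.integral_rpow_mul_exp_neg_mul_Ioi (a := p + 1) (by linarith) ha

lemma integrableOn_rpow_mul_exp_neg_mul_Ioi (ha : 0 < a) (hp : -1 < p) :
    IntegrableOn (fun t : ℝ => t ^ p * Real.exp (-a * t)) (Set.Ioi 0) := by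
  simpa using integrableOn_rpow_mul_exp_neg_mul_rpow (p := 1) hp one_pos ha

lemma integral_sub_mul_rpow_mul_exp_neg_mul_Ioi (ha : 0 < a) (hp : -1 < p) (x : ℝ) :
    ∫ t in Set.Ioi (0 : ℝ), (t - x) * t ^ p * Real.exp (-a * t)
      = Real.Gamma (p + 1) / a ^ (p + 1) * ((p + 1) / a - x) := by
  have hp1 : -1 < p + 1 := by linarith
  have hsplit : ∀ t ∈ Set.Ioi (0 : ℝ), (t - x) * t ^ p * Real.exp (-a * t)
      = t ^ (p + 1) * Real.exp (-a * t) - x * (t ^ p * Real.exp (-a * t)) := by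
    intro t ht
    rw [Real.rpow_add_one (ne_of_gt ht)]
    ring
  rw [setIntegral_congr_fun measurableSet_Ioi hsplit,
    integral_sub (integrableOn_rpow_mul_exp_neg_mul_Ioi ha hp1)
      ((integrableOn_rpow_mul_exp_neg_mul_Ioi ha hp).const_mul x),
    integral_const_mul, integral_rpow_mul_exp_neg_mul_Ioi' ha hp1,
    integral_rpow_mul_exp_neg_mul_Ioi' ha hp, Real.Gamma_add_one (by linarith),
    Real.rpow_add_one ha.ne']
  field_simp

end GammaIntegral

theorem stmt_7_general (α β : ℝ) (hα : -1 < α) (n : ℕ) (hn : β < n) (x : ℝ) :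
    M α β n (fun t => t - x) x = (α + 1 + β * x) / ((n : ℝ) - β) := by
  have ha : 0 < (n : ℝ) - β := sub_pos.mpr hn
  have hcoeff : ∀ k : ℕ, (((n : ℝ) - β) ^ ((k : ℝ) + α + 1) / Real.Gamma ((k : ℝ) + α + 1)) *
        (∫ t in Set.Ioi (0 : ℝ), (t - x) * t ^ ((k : ℝ) + α) * Real.exp (-((n : ℝ) - β) * t)) *
        psi n k x
      = 1 / ((n : ℝ) - β) * (k * psi n k x) + ((α + 1) / ((n : ℝ) - β) - x) * psi n k x := by
    intro k
    have hp : -1 < (k : ℝ) + α := by linarith [k.cast_nonneg (α := ℝ)]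
    have hΓ : 0 < Real.Gamma ((k : ℝ) + α + 1) := Real.Gamma_pos_of_pos (by linarith)
    rw [integral_sub_mul_rpow_mul_exp_neg_mul_Ioi ha hp]
    field_simp
    ring
  rw [M, tsum_congr hcoeff,
    (((hasSum_mul_psi n x).mul_left _).add ((hasSum_psi n x).mul_left _)).tsum_eq]
  field_simp
  ring

/-- The first central moment. -/
theorem stmt_7 (α β : ℝ) (hα : -1 < α) (n : ℕ) (hn : β < n) (x : ℝ) (hx : 0 ≤ x) :
    M α β n (fun t => t - x) x = (α + 1 + β * x) / ((n : ℝ) - β) :=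
  stmt_7_general α β hα n hn x
end

section
/- For every x ≥ 0, the second central moment satisfies M_n^{(α,β)}[t ↦ (t − x)^2](x) = ((α+1)(α+2) + 2x(n + β(α+1)) + β^2 x^2) / (n − β)^2. -/
open MeasureTheory Real Filter

/-!
Both ingredients of `M` have explicit moments. The Gamma density `c^{s+1} t^s e^{-ct} / Γ(s+1)`
has `∫ t^j = (s+1)⋯(s+j) / c^j`, so expanding `(t - x)^2` turns the `k`-th coefficient into a
quadratic polynomial in `k`. Against the Poisson weights `ψ_{n,k}(x)` the factorial moments are
`∑ k(k-1)⋯(k-j+1) ψ_{n,k}(x) = (nx)^j`, and collecting terms with `c = n - β` gives the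
formula.
-/

open Set
open scoped Nat

lemma hasSum_descFactorial_mul_pow_div_factorial (j : ℕ) (y : ℝ) :
    HasSum (fun k : ℕ => (k.descFactorial j : ℝ) * y ^ k / k !) (y ^ j * exp y) := by
  rw [← hasSum_nat_add_iff' j]
  have hlow : ∑ i ∈ Finset.range j, (i.descFactorial j : ℝ) * y ^ i / i ! = 0 :=
    Finset.sum_eq_zero fun i hi => by
      rw [Nat.descFactorial_eq_zero_iff_lt.mpr (Finset.mem_range.mp hi)]
      simp
  have hshift (k : ℕ) :
      ((k + j).descFactorial j : ℝ) * y ^ (k + j) / (k + j)! = y ^ j * (y ^ k / k !) := by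
    have h := Nat.factorial_mul_descFactorial (Nat.le_add_left j k)
    rw [Nat.add_sub_cancel] at h
    rw [← h]
    push_cast
    field_simp
    ring
  rw [hlow, sub_zero, funext hshift, Real.exp_eq_exp_ℝ]
  exact (NormedSpace.expSeries_div_hasSum_exp y).mul_left (y ^ j)

lemma hasSum_descFactorial_mul_psi (j n : ℕ) (x : ℝ) :
    HasSum (fun k : ℕ => (k.descFactorial j : ℝ) * psi n k x) ((n * x) ^ j) := by
  have h := (hasSum_descFactorial_mul_pow_div_factorial j (n * x)).mul_left (exp (-(n * x)))
  rw [mul_left_comm, ← exp_add, neg_add_cancel, exp_zero, mul_one] at h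
  refine h.congr_fun fun k => ?_
  rw [psi]
  ring

section GammaDensity

variable {c s : ℝ}

lemma integrableOn_pow_mul_rpow_mul_exp_neg_mul (hs : -1 < s) (hc : 0 < c) (j : ℕ) :
    IntegrableOn (fun t : ℝ => t ^ j * t ^ s * exp (-c * t)) (Ioi 0) := by
  have hsj : -1 < s + j := by linarith [(Nat.cast_nonneg j : (0 : ℝ) ≤ j)]
  refine (integrableOn_rpow_mul_exp_neg_mul_rpow hsj one_pos hc).congr_fun
    (fun t ht => ?_) measurableSet_Ioi
  dsimp only
  rw [rpow_one, rpow_add_natCast (ne_of_gt ht)]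
  ring

lemma integral_pow_mul_rpow_mul_exp_neg_mul (hs : -1 < s) (hc : 0 < c) (j : ℕ) :
    ∫ t in Ioi 0, t ^ j * t ^ s * exp (-c * t) = Gamma (s + 1 + j) / c ^ (s + 1 + j) := by
  have h := integral_rpow_mul_exp_neg_mul_Ioi (a := s + 1 + j)
    (by linarith [(Nat.cast_nonneg j : (0 : ℝ) ≤ j)]) hc
  rw [one_div, inv_rpow hc.le, ← div_eq_inv_mul] at h
  rw [← h]
  refine setIntegral_congr_fun measurableSet_Ioi fun t ht => ?_
  rw [show s + 1 + j - 1 = s + j by ring, rpow_add_natCast (ne_of_gt ht), neg_mul]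
  ring

lemma rpow_div_Gamma_mul_integral_sq_sub_mul_rpow_mul_exp_neg_mul (hs : -1 < s) (hc : 0 < c)
    (x : ℝ) :
    c ^ (s + 1) / Gamma (s + 1) * ∫ t in Ioi 0, (t - x) ^ 2 * t ^ s * exp (-c * t) =
      ((s + 1) * (s + 2) - 2 * x * c * (s + 1) + x ^ 2 * c ^ 2) / c ^ 2 := by
  have hint := integrableOn_pow_mul_rpow_mul_exp_neg_mul hs hc
  have hexpand : (fun t : ℝ => (t - x) ^ 2 * t ^ s * exp (-c * t)) = fun t =>
      t ^ 2 * t ^ s * exp (-c * t) - 2 * x * (t ^ 1 * t ^ s * exp (-c * t)) +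
        x ^ 2 * (t ^ 0 * t ^ s * exp (-c * t)) := by
    ext t
    ring
  rw [hexpand, integral_add ?_ ((hint 0).const_mul _),
    integral_sub (hint 2) ((hint 1).const_mul _), integral_const_mul, integral_const_mul]
  swap
  · exact (hint 2).sub ((hint 1).const_mul _)
  simp only [integral_pow_mul_rpow_mul_exp_neg_mul hs hc, rpow_add_natCast hc.ne']
  have hs1 : s + 1 ≠ 0 := by linarith
  have hΓ1 : Gamma (s + 1 + (1 : ℕ)) = (s + 1) * Gamma (s + 1) := by
    rw [Nat.cast_one, Gamma_add_one hs1]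
  have hΓ2 : Gamma (s + 1 + (2 : ℕ)) = (s + 2) * ((s + 1) * Gamma (s + 1)) := by
    rw [show s + 1 + ((2 : ℕ) : ℝ) = s + 1 + 1 + 1 by push_cast; ring,
      Gamma_add_one (by linarith), Gamma_add_one hs1]
    ring
  have hΓ : 0 < Gamma (s + 1) := Gamma_pos_of_pos (by linarith)
  have hcs : 0 < c ^ (s + 1) := rpow_pos_of_pos hc _
  rw [hΓ1, hΓ2, Nat.cast_zero, add_zero]
  field_simp

end GammaDensity

theorem stmt_8_general (α β : ℝ) (hα : -1 < α) (n : ℕ) (hn : β < n) (x : ℝ) :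
    M α β n (fun t => (t - x) ^ 2) x =
      ((α + 1) * (α + 2) + 2 * x * ((n : ℝ) + β * (α + 1)) + β ^ 2 * x ^ 2) /
        ((n : ℝ) - β) ^ 2 := by
  have hc : 0 < (n : ℝ) - β := sub_pos.mpr hn
  set c := (n : ℝ) - β
  -- `(k+α+1)(k+α+2) - 2xc(k+α+1) + x²c²` written in the basis `k(k-1), k, 1`
  have hmoments := ((((hasSum_descFactorial_mul_psi 2 n x).add
    ((hasSum_descFactorial_mul_psi 1 n x).mul_left (2 * α + 4 - 2 * x * c))).add
    ((hasSum_descFactorial_mul_psi 0 n x).mul_left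
      ((α + 1) * (α + 2) - 2 * x * c * (α + 1) + x ^ 2 * c ^ 2))).div_const (c ^ 2))
  rw [M]
  convert hmoments.tsum_eq using 1
  · refine tsum_congr fun k => ?_
    have hs : -1 < (k : ℝ) + α := by linarith [(Nat.cast_nonneg k : (0 : ℝ) ≤ k)]
    rw [rpow_div_Gamma_mul_integral_sq_sub_mul_rpow_mul_exp_neg_mul hs hc,
      Nat.cast_descFactorial_two, Nat.descFactorial_one, Nat.descFactorial_zero, Nat.cast_one]
    ring
  · field_simp
    ring

/-- The second central moment. -/
theorem stmt_8 (α β : ℝ) (hα : -1 < α) (n : ℕ) (hn : β < n) (x : ℝ) (hx : 0 ≤ x) :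
    M α β n (fun t => (t - x) ^ 2) x =
      ((α + 1) * (α + 2) + 2 * x * ((n : ℝ) + β * (α + 1)) + β ^ 2 * x ^ 2) /
        ((n : ℝ) - β) ^ 2 :=
  stmt_8_general α β hα n hn x
end
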